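/- arXiv:1708.01331 — 2 statements merged into one kernel-verified Lean document; each statement's English description precedes it below -/
import Mathlib

section
/- For real numbers q and α with 0 < α < q (so that both Gamma arguments are positive), ∫₀^∞ (r/(1+r²))^q · r^{-(α+1)} dr = Γ((q−α)/2) · Γ((q+α)/2) / (2 Γ(q)). -/
/-!
With a = (q - α)/2 and b = (q + α)/2 the integrand is r^(2a-1) (1 + r²)^(-(a+b)). The substitution
u = r² turns the integral into half of ∫₀^∞ u^(a-1) (1 + u)^(-(a+b)) du, and the substitution
u = t/(1 - t) turns that into Euler's Beta integral B(a, b) = Γ(a) Γ(b) / Γ(a + b).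
-/

open Real MeasureTheory Set

theorem Complex.betaIntegral_ofReal (a b : ℝ) :
    Complex.betaIntegral a b = ↑(∫ x in Ioo (0 : ℝ) 1, x ^ (a - 1) * (1 - x) ^ (b - 1)) := by
  rw [Complex.betaIntegral, intervalIntegral.integral_of_le zero_le_one,
    ← integral_Ioc_eq_integral_Ioo]
  refine (setIntegral_congr_fun measurableSet_Ioc fun x hx => ?_).trans integral_ofReal
  have hx' : 0 ≤ 1 - x := by linarith [hx.2]
  simp [Complex.ofReal_cpow hx.1.le, Complex.ofReal_cpow hx']

theorem integral_Ioo_rpow_mul_one_sub_rpow {a b : ℝ} (ha : 0 < a) (hb : 0 < b) :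
    ∫ x in Ioo (0 : ℝ) 1, x ^ (a - 1) * (1 - x) ^ (b - 1) =
      Gamma a * Gamma b / Gamma (a + b) := by
  apply Complex.ofReal_injective
  rw [← Complex.betaIntegral_ofReal, Complex.betaIntegral_eq_Gamma_mul_div _ _ (by simpa)
    (by simpa)]
  push_cast [← Complex.ofReal_add, Complex.Gamma_ofReal]
  rfl

theorem bijOn_div_one_sub_Ioo_Ioi : BijOn (fun t : ℝ => t / (1 - t)) (Ioo 0 1) (Ioi 0) := by
  refine InvOn.bijOn (f' := fun u => u / (1 + u)) ⟨fun t ht => ?_, fun u hu => ?_⟩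
    (fun t ht => ?_) (fun u hu => ?_)
  · have : 1 - t ≠ 0 := by linarith [ht.2]
    simp only
    field_simp
    ring
  · have : 1 + u ≠ 0 := by linarith [mem_Ioi.1 hu]
    simp only
    field_simp
    ring
  · exact div_pos ht.1 (by linarith [ht.2])
  · have hu : 0 < u := hu
    exact ⟨by positivity, (div_lt_one (by positivity)).2 (by linarith)⟩

theorem hasDerivAt_div_one_sub {t : ℝ} (ht : t ≠ 1) :
    HasDerivAt (fun t : ℝ => t / (1 - t)) ((1 - t) ^ 2)⁻¹ t := by
  have h : 1 - t ≠ 0 := sub_ne_zero.2 (Ne.symm ht)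
  refine ((hasDerivAt_id' t).div ((hasDerivAt_id' t).const_sub 1) h).congr_deriv ?_
  field_simp
  ring

theorem integral_Ioi_rpow_mul_one_add_rpow_neg {a b : ℝ} (ha : 0 < a) (hb : 0 < b) :
    ∫ u in Ioi (0 : ℝ), u ^ (a - 1) * (1 + u) ^ (-(a + b)) =
      Gamma a * Gamma b / Gamma (a + b) := by
  rw [← bijOn_div_one_sub_Ioo_Ioi.image_eq, integral_image_eq_integral_abs_deriv_smul
    measurableSet_Ioo (fun t ht => (hasDerivAt_div_one_sub ht.2.ne).hasDerivWithinAt)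
    bijOn_div_one_sub_Ioo_Ioi.injOn, ← integral_Ioo_rpow_mul_one_sub_rpow ha hb]
  refine setIntegral_congr_fun measurableSet_Ioo fun t ⟨ht0, ht1⟩ => ?_
  have hs : 0 < 1 - t := sub_pos.2 ht1
  have h_one_add : 1 + t / (1 - t) = (1 - t)⁻¹ := by field_simp; ring
  rw [show b - 1 = a + b - (a - 1) - 2 by ring, rpow_sub hs, rpow_sub hs, rpow_two, smul_eq_mul,
    abs_of_pos (by positivity), h_one_add, div_rpow ht0.le hs.le, inv_rpow hs.le, rpow_neg hs.le,
    inv_inv]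
  ring

theorem integral_Ioi_rpow_mul_one_add_sq_rpow_neg {a b : ℝ} (ha : 0 < a) (hb : 0 < b) :
    ∫ r in Ioi (0 : ℝ), r ^ (2 * a - 1) * (1 + r ^ 2) ^ (-(a + b)) =
      Gamma a * Gamma b / (2 * Gamma (a + b)) := by
  have h_subst := integral_comp_rpow_Ioi_of_pos (p := 2) two_pos
    (g := fun u => u ^ (a - 1) * (1 + u) ^ (-(a + b)))
  rw [integral_Ioi_rpow_mul_one_add_rpow_neg ha hb] at h_subst
  rw [mul_comm 2 (Gamma (a + b)), ← div_div, ← h_subst, ← integral_div]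
  refine setIntegral_congr_fun measurableSet_Ioi fun r (hr : 0 < r) => ?_
  rw [smul_eq_mul, rpow_two, ← rpow_natCast, ← rpow_mul hr.le]
  push_cast
  rw [show (2 : ℝ) - 1 = 1 by norm_num, rpow_one, mul_comm 2 r, show 2 * a - 1 = 2 * (a - 1) + 1 by ring, rpow_add hr, rpow_one]
  ring

theorem stmt2 (q α : ℝ) (hα : 0 < α) (hq : α < q) :
    ∫ r in Set.Ioi (0 : ℝ), (r / (1 + r ^ 2)) ^ q * r ^ (-(α + 1)) =
      Real.Gamma ((q - α) / 2) * Real.Gamma ((q + α) / 2) / (2 * Real.Gamma q) := by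
  have h_integrand : ∀ r ∈ Ioi (0 : ℝ), (r / (1 + r ^ 2)) ^ q * r ^ (-(α + 1)) =
      r ^ (2 * ((q - α) / 2) - 1) * (1 + r ^ 2) ^ (-((q - α) / 2 + (q + α) / 2)) := by
    intro r (hr : 0 < r)
    rw [show 2 * ((q - α) / 2) - 1 = q + -(α + 1) by ring,
      show (q - α) / 2 + (q + α) / 2 = q by ring, div_rpow hr.le (by positivity), rpow_add hr,
      rpow_neg (by positivity : (0 : ℝ) ≤ 1 + r ^ 2)]
    ring
  rw [setIntegral_congr_fun measurableSet_Ioi h_integrand,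
    integral_Ioi_rpow_mul_one_add_sq_rpow_neg (by linarith) (by linarith)]
  congr 3
  ring
end

section
/- Let a ∈ (1/49, 1). Then for every r with a < r < 1, one has 4(a − 2ar + r²)/(r²(1−a)) > 1/r. -/
theorem stmt13 (a r : ℝ) (ha1 : 1 / 49 < a) (ha2 : a < 1) (hr1 : a < r) (hr2 : r < 1) :
    1 / r < 4 * (a - 2 * a * r + r ^ 2) / (r ^ 2 * (1 - a)) := by
  have hr0 : 0 < r := lt_trans (by linarith) hr1
  have h1 : 0 < r ^ 2 * (1 - a) := mul_pos (pow_pos hr0 2) (by linarith)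
  rw [div_lt_div_iff₀ hr0 h1]
  have hf : 0 < 4 * r ^ 2 - (7 * a + 1) * r + 4 * a := by
    nlinarith [sq_nonneg (8 * r - (7 * a + 1)),
      mul_pos (by linarith : (0:ℝ) < 49 * a - 1) (by linarith : (0:ℝ) < 1 - a)]
  nlinarith [mul_pos hr0 hf]
end
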